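/- arXiv:2305.03651 — 6 statements merged into one kernel-verified Lean document; each statement's English description precedes it below -/
import Mathlib

section
/- For the complete graph K_{n+1} on vertex set {0,1,...,n} with all edge weights equal to 1 and root 0, the set of G-parking functions equals the set of classical parking functions of length n. -/
/-!
Both notions are equivalent to the counting criterion: for every `i < n`, at least `i + 1`
entries are `≤ i`. For the complete graph, a vertex of `U` has exactly `n + 1 - #U` neighbours
outside `U`, so the parking condition on `U` only sees `#U`, and testing the sets
`U = {j | i < b j}` recovers the criterion. For a sorted sequence `c` the criterion is
equivalent to `c i ≤ i` for all `i`, because `c i ≤ i` forces `c j ≤ i` for every `j ≤ i`.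
-/

/-- For a multigraph on `{0,…,n}` encoded by a symmetric weight function `wt`
(root `0`, nonroot vertex `i : Fin n` is `i.succ`), `dU wt U i` is the total
weight of edges from `i` to vertices outside `U`. -/
def dU (n : ℕ) (wt : Fin (n + 1) → Fin (n + 1) → ℕ) (U : Finset (Fin n)) (i : Fin n) : ℕ :=
  ∑ j ∈ (U.image Fin.succ)ᶜ, wt i.succ j

/-- `b` is a `G`-parking function: every nonempty set `U` of nonroot vertices
contains `i` with `b i < dU wt U i`. -/
def IsGPF (n : ℕ) (wt : Fin (n + 1) → Fin (n + 1) → ℕ) (b : Fin n → ℕ) : Prop :=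
  ∀ U : Finset (Fin n), U.Nonempty → ∃ i ∈ U, b i < dU n wt U i

/-- `b` is a maximal `G`-parking function (w.r.t. the coordinatewise order). -/
def IsMaxGPF (n : ℕ) (wt : Fin (n + 1) → Fin (n + 1) → ℕ) (b : Fin n → ℕ) : Prop :=
  IsGPF n wt b ∧ ∀ c : Fin n → ℕ, IsGPF n wt c → b ≤ c → c = b

/-- `a` is a classical parking function of length `n`. -/
def IsPF (n : ℕ) (a : Fin n → ℕ) : Prop :=
  ∃ σ : Equiv.Perm (Fin n), Monotone (a ∘ ⇑σ) ∧ ∀ i : Fin n, a (σ i) < (i : ℕ) + 1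

open Finset

section Monotone

variable {n : ℕ} {β : Type*} [Preorder β] [DecidableLE β] {c : Fin n → β}

theorem Monotone.val_add_one_le_card_filter (hc : Monotone c) {i : Fin n} {x : β}
    (h : c i ≤ x) : (i : ℕ) + 1 ≤ #{j | c j ≤ x} := by
  rw [← Fin.card_Iic]
  exact card_le_card fun j hj => mem_filter.2 ⟨mem_univ j, (hc (mem_Iic.1 hj)).trans h⟩

theorem Monotone.card_filter_le_val (hc : Monotone c) {i : Fin n} {x : β}
    (h : x < c i) : #{j | c j ≤ x} ≤ i := by
  rw [← Fin.card_Iio]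
  refine card_le_card fun j hj => mem_Iio.2 (lt_of_not_ge fun hij => ?_)
  exact (h.trans_le (hc hij)).not_ge (mem_filter.1 hj).2

end Monotone

theorem card_filter_comp_perm {n : ℕ} {β : Type*} [LE β] [DecidableLE β] (b : Fin n → β)
    (σ : Equiv.Perm (Fin n)) (x : β) : #{j | b (σ j) ≤ x} = #{j | b j ≤ x} :=
  card_equiv σ fun j => by simp

theorem isPF_iff_forall_le_card (n : ℕ) (b : Fin n → ℕ) :
    IsPF n b ↔ ∀ i : Fin n, (i : ℕ) + 1 ≤ #{j | b j ≤ i} := by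
  constructor
  · rintro ⟨σ, hmono, hlt⟩ i
    rw [← card_filter_comp_perm b σ]
    exact hmono.val_add_one_le_card_filter (Nat.lt_succ_iff.1 (hlt i))
  · intro hcount
    refine ⟨Tuple.sort b, Tuple.monotone_sort b, fun i => ?_⟩
    by_contra! hge
    have hle := (Tuple.monotone_sort b).card_filter_le_val (x := (i : ℕ)) hge
    rw [Function.comp_def, card_filter_comp_perm b] at hle
    exact absurd (hcount i) (by omega)

theorem dU_complete_of_mem {n : ℕ} {U : Finset (Fin n)} {i : Fin n} (hi : i ∈ U) :
    dU n (fun i j => if i = j then 0 else 1) U i = n + 1 - #U := by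
  have hne : ∀ j ∈ (U.image Fin.succ)ᶜ, (if i.succ = j then 0 else 1) = 1 := by
    rintro j hj
    rw [if_neg]
    rintro rfl
    exact mem_compl.1 hj (mem_image_of_mem _ hi)
  rw [dU, sum_congr rfl hne, sum_const, smul_eq_mul, mul_one, card_compl,
    card_image_of_injective _ (Fin.succ_injective n), Fintype.card_fin]

theorem isGPF_complete_iff_forall_le_card (n : ℕ) (b : Fin n → ℕ) :
    IsGPF n (fun i j => if i = j then 0 else 1) b ↔
      ∀ i : Fin n, (i : ℕ) + 1 ≤ #{j | b j ≤ i} := by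
  constructor
  · intro hpark i
    by_contra! hfew
    have hsplit := card_filter_add_card_filter_not (s := univ) fun j => b j ≤ (i : ℕ)
    rw [card_univ, Fintype.card_fin] at hsplit
    have hne : ({j | ¬b j ≤ (i : ℕ)} : Finset (Fin n)).Nonempty := by
      rw [← card_pos]; omega
    obtain ⟨j, hjU, hj⟩ := hpark _ hne
    rw [dU_complete_of_mem hjU] at hj
    exact (mem_filter.1 hjU).2 (by omega)
  · intro hcount U hU
    have hU_pos := card_pos.2 hU
    have hU_le : #U ≤ n := by simpa using card_le_univ U
    have hUc : #Uᶜ = n - #U := by rw [card_compl, Fintype.card_fin]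
    have hk := hcount ⟨n - #U, by omega⟩
    have hnsub : ¬({j | b j ≤ n - #U} : Finset (Fin n)) ⊆ Uᶜ := fun hsub => by
      have := card_le_card hsub
      simp only at hk
      omega
    obtain ⟨j, hj, hj_notin⟩ := not_subset.1 hnsub
    have hjU : j ∈ U := by simpa using hj_notin
    refine ⟨j, hjU, ?_⟩
    rw [dU_complete_of_mem hjU]
    have hbj := (mem_filter.1 hj).2
    omega

/-- For the complete graph `K_{n+1}` with all edge weights `1` and root `0`,
the `G`-parking functions are exactly the classical parking functions. -/
theorem gParking_complete_eq_classical (n : ℕ) (b : Fin n → ℕ) :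
    IsGPF n (fun i j => if i = j then 0 else 1) b ↔ IsPF n b := by
  rw [isGPF_complete_iff_forall_le_card, isPF_iff_forall_le_card]
end

section
/- Let G be a connected multigraph on {0,...,n} with root 0. Any two maximal G-parking functions have the same sum of entries; specifically, for every maximal G-parking function b, Σ_i b_i = (total edge weight of G) − n, where edges are counted with multiplicity/weight. -/
lemma dU_anti (n : ℕ) (wt : Fin (n + 1) → Fin (n + 1) → ℕ) {V U : Finset (Fin n)}
    (h : V ⊆ U) (i : Fin n) : dU n wt U i ≤ dU n wt V i := by
  apply Finset.sum_le_sum_of_subset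
  exact Finset.compl_subset_compl.mpr (Finset.image_subset_image h)

lemma dU_erase (n : ℕ) (wt : Fin (n + 1) → Fin (n + 1) → ℕ) {U : Finset (Fin n)}
    {v : Fin n} (hv : v ∈ U) (i : Fin n) :
    dU n wt (U.erase v) i = wt i.succ v.succ + dU n wt U i := by
  have h2 : ((U.erase v).image Fin.succ)ᶜ = insert v.succ (U.image Fin.succ)ᶜ := by
    have h1 : U.image Fin.succ = insert v.succ ((U.erase v).image Fin.succ) := by
      rw [← Finset.image_insert, Finset.insert_erase hv]
    have hv' : v.succ ∈ ((U.erase v).image Fin.succ)ᶜ := by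
      simp only [Finset.mem_compl, Finset.mem_image, not_exists]
      rintro a ⟨ha, hae⟩
      exact (Finset.mem_erase.mp ha).1 (Fin.succ_injective _ hae)
    rw [h1, Finset.compl_insert, Finset.insert_erase hv']
  have hvn : v.succ ∉ (U.image Fin.succ)ᶜ := by
    simp only [Finset.mem_compl, not_not]
    exact Finset.mem_image_of_mem _ hv
  rw [dU, h2, Finset.sum_insert hvn]
  rfl

lemma key (n : ℕ) (wt : Fin (n + 1) → Fin (n + 1) → ℕ)
    (hsymm : ∀ i j, wt i j = wt j i) (hloop : ∀ i, wt i i = 0)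
    (b : Fin n → ℕ) (hb : IsGPF n wt b) (U : Finset (Fin n)) :
    ∃ c : Fin n → ℕ, b ≤ c ∧ (∀ i ∉ U, c i = b i) ∧
      (∀ V : Finset (Fin n), V ⊆ U → V.Nonempty → ∃ i ∈ V, c i < dU n wt V i) ∧
      2 * ∑ i ∈ U, (c i + 1) =
        (∑ i ∈ U, ∑ j ∈ U, wt i.succ j.succ) + 2 * ∑ i ∈ U, dU n wt U i := by
  induction U using Finset.strongInduction with
  | _ U ih =>
    rcases U.eq_empty_or_nonempty with rfl | hne
    · exact ⟨b, le_refl _, fun _ _ => rfl, fun V hV hVne => absurd (hV hVne.choose_spec)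
        (Finset.notMem_empty _), by simp⟩
    · obtain ⟨v, hvU, hvlt⟩ := hb U hne
      obtain ⟨c', hle', hoff', hpark', hsum'⟩ := ih (U.erase v) (Finset.erase_ssubset hvU)
      refine ⟨Function.update c' v (dU n wt U v - 1), ?_, ?_, ?_, ?_⟩
      · intro i
        rcases eq_or_ne i v with rfl | hne'
        · simpa [Function.update] using Nat.le_sub_one_of_lt hvlt
        · simpa [Function.update, hne'] using hle' i
      · intro i hi
        have hne' : i ≠ v := fun h => hi (h ▸ hvU)
        rw [Function.update_of_ne hne', hoff' i (fun h => hi (Finset.mem_of_mem_erase h))]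
      · intro V hVU hVne
        by_cases hvV : v ∈ V
        · refine ⟨v, hvV, ?_⟩
          rw [Function.update_self]
          calc dU n wt U v - 1 < dU n wt U v := Nat.sub_lt (Nat.pos_of_ne_zero (by omega)) one_pos
            _ ≤ dU n wt V v := dU_anti n wt hVU v
        · have hVU' : V ⊆ U.erase v := fun x hx =>
            Finset.mem_erase.mpr ⟨fun h => hvV (h ▸ hx), hVU hx⟩
          obtain ⟨i, hiV, hilt⟩ := hpark' V hVU' hVne
          refine ⟨i, hiV, ?_⟩
          rw [Function.update_of_ne (fun h : i = v => hvV (h ▸ hiV))]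
          exact hilt
      · -- arithmetic
        set c := Function.update c' v (dU n wt U v - 1) with hc
        have hcv : c v + 1 = dU n wt U v := by
          rw [hc, Function.update_self]
          omega
        have hsum_split : ∀ f : Fin n → ℕ, ∑ i ∈ U, f i = f v + ∑ i ∈ U.erase v, f i :=
          fun f => (Finset.add_sum_erase U f hvU).symm
        have hcc' : ∀ i ∈ U.erase v, c i = c' i := by
          intro i hi
          rw [hc, Function.update_of_ne (Finset.mem_erase.mp hi).1]
        have e1 : ∑ i ∈ U, (c i + 1) = dU n wt U v + ∑ i ∈ U.erase v, (c' i + 1) := by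
          rw [hsum_split, hcv, Finset.sum_congr rfl (fun i hi => by rw [hcc' i hi])]
        have e2 : ∑ i ∈ U.erase v, dU n wt (U.erase v) i
            = (∑ i ∈ U.erase v, wt i.succ v.succ) + ∑ i ∈ U.erase v, dU n wt U i := by
          rw [← Finset.sum_add_distrib]
          exact Finset.sum_congr rfl (fun i _ => dU_erase n wt hvU i)
        have e3 : ∑ i ∈ U, ∑ j ∈ U, wt i.succ j.succ
            = 2 * (∑ i ∈ U.erase v, wt i.succ v.succ)
              + ∑ i ∈ U.erase v, ∑ j ∈ U.erase v, wt i.succ j.succ := by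
          rw [hsum_split (fun i => ∑ j ∈ U, wt i.succ j.succ)]
          rw [Finset.sum_congr rfl (fun i (_ : i ∈ U.erase v) =>
            hsum_split (fun j => wt i.succ j.succ))]
          rw [hsum_split (fun j => wt v.succ j.succ), hloop, Finset.sum_add_distrib]
          have : ∑ j ∈ U.erase v, wt v.succ j.succ = ∑ i ∈ U.erase v, wt i.succ v.succ :=
            Finset.sum_congr rfl (fun i _ => hsymm _ _)
          omega
        have e4 : ∑ i ∈ U, dU n wt U i = dU n wt U v + ∑ i ∈ U.erase v, dU n wt U i :=
          hsum_split _
        rw [e1, e3, e4]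
        omega

/-- All maximal `G`-parking functions of a connected multigraph have the same
coordinate sum, namely (total edge weight of `G`) − `n`; equivalently
`2 * (Σᵢ bᵢ + n) = Σᵢ Σⱼ wt i j` (each edge is counted twice in the double sum). -/
theorem maxGParking_sum (n : ℕ) (wt : Fin (n + 1) → Fin (n + 1) → ℕ)
    (hsymm : ∀ i j, wt i j = wt j i) (hloop : ∀ i, wt i i = 0)
    (hconn : (SimpleGraph.fromRel fun i j : Fin (n + 1) => wt i j ≠ 0).Connected)
    (b : Fin n → ℕ) (hb : IsMaxGPF n wt b) :
    2 * ((∑ i, b i) + n) = ∑ i : Fin (n + 1), ∑ j : Fin (n + 1), wt i j := by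
  obtain ⟨c, hle, hoff, hpark, hsum⟩ :=
    key n wt hsymm hloop b hb.1 Finset.univ
  have hcb : c = b := hb.2 c (fun V hV => hpark V (Finset.subset_univ V) hV) hle
  subst hcb
  -- compute dU over univ
  have hcompl : ((Finset.univ.image Fin.succ : Finset (Fin (n + 1))))ᶜ = {0} := by
    ext j
    simp only [Finset.mem_compl, Finset.mem_image, Finset.mem_univ, true_and,
      Finset.mem_singleton]
    constructor
    · intro h
      by_contra h0
      obtain ⟨i, hi⟩ := Fin.exists_succ_eq.mpr h0
      exact h ⟨i, hi⟩
    · rintro rfl ⟨i, hi⟩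
      exact Fin.succ_ne_zero i hi
  have hdU : ∀ i : Fin n, dU n wt Finset.univ i = wt i.succ 0 := by
    intro i
    rw [dU, hcompl, Finset.sum_singleton]
  have hsumb : ∑ i ∈ Finset.univ, (c i + 1) = (∑ i, c i) + n := by
    rw [Finset.sum_add_distrib]
    simp
  have h2 : ∑ i ∈ Finset.univ, dU n wt Finset.univ i = ∑ i : Fin n, wt i.succ 0 :=
    Finset.sum_congr rfl (fun i _ => hdU i)
  rw [hsumb, h2] at hsum
  have hrhs : ∑ i : Fin (n + 1), ∑ j : Fin (n + 1), wt i j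
      = wt 0 0 + (∑ j : Fin n, wt 0 j.succ)
        + ((∑ i : Fin n, wt i.succ 0) + ∑ i : Fin n, ∑ j : Fin n, wt i.succ j.succ) := by
    rw [Fin.sum_univ_succ (f := fun i => ∑ j : Fin (n + 1), wt i j),
      Fin.sum_univ_succ (f := fun j => wt 0 j)]
    congr 1
    rw [← Finset.sum_add_distrib]
    exact Finset.sum_congr rfl (fun i _ => Fin.sum_univ_succ (f := fun j => wt i.succ j))
  have hs0 : ∑ j : Fin n, wt 0 j.succ = ∑ j : Fin n, wt j.succ 0 :=
    Finset.sum_congr rfl (fun j _ => hsymm _ _)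
  have hl0 := hloop 0
  omega
end

section
/- Let G be a connected multigraph on {0,...,n} with root 0, and let O be an acyclic orientation of G in which 0 is the unique source. Then the sequence (indeg_O(1) − 1, ..., indeg_O(n) − 1) is a maximal G-parking function, and this map from acyclic orientations with unique source 0 to maximal G-parking functions is a bijection. -/
/-- `O` is an orientation of the multigraph encoded by `wt`: every edge gets
exactly one direction, and only edges are oriented. -/
def IsOrient (n : ℕ) (wt : Fin (n + 1) → Fin (n + 1) → ℕ)
    (O : Fin (n + 1) → Fin (n + 1) → Bool) : Prop :=
  (∀ i j, wt i j ≠ 0 ↔ (O i j = true ∨ O j i = true)) ∧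
    ∀ i j, O i j = true → O j i = false

/-- Weighted indegree of vertex `i` under orientation `O`. -/
def indeg (n : ℕ) (wt : Fin (n + 1) → Fin (n + 1) → ℕ)
    (O : Fin (n + 1) → Fin (n + 1) → Bool) (i : Fin (n + 1)) : ℕ :=
  ∑ j, if O j i then wt j i else 0

/-- `O` is acyclic: no directed cycle. -/
def AcyclicO (n : ℕ) (O : Fin (n + 1) → Fin (n + 1) → Bool) : Prop :=
  ∀ i, ¬ Relation.TransGen (fun a b => O a b = true) i i

/-- The root `0` is the unique source (vertex of indegree `0`) of `O`. -/
def UniqueSource0 (n : ℕ) (wt : Fin (n + 1) → Fin (n + 1) → ℕ)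
    (O : Fin (n + 1) → Fin (n + 1) → Bool) : Prop :=
  ∀ v, indeg n wt O v = 0 ↔ v = 0

/-!
In an acyclic orientation with unique source `0`, a vertex of a nonempty set `U` that receives
no edge from `U` has all its (at least one) in-edges coming from outside `U`; so `indeg_O - 1` is a
`G`-parking function. Conversely, Dhar's burning algorithm orders the nonroot vertices so that
each one has more than `c i` edges to the root and to the earlier vertices, for a given
`G`-parking function `c`; orienting every edge forwards along this order gives an acyclic
orientation `O` with unique source `0` and `c < indeg_O`. The total indegree of any orientation is
`|E(G)|`, so every `G`-parking function has sum at most `|E(G)| - n`, with equality for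
`indeg_O - 1`: this gives maximality and surjectivity. Injectivity holds because an acyclic
orientation is determined by its indegrees.
-/

section

variable {n : ℕ} {wt : Fin (n + 1) → Fin (n + 1) → ℕ} {O O' : Fin (n + 1) → Fin (n + 1) → Bool}

lemma AcyclicO.wellFounded (hac : AcyclicO n O) : WellFounded fun a b => O a b = true :=
  have : Std.Irrefl (Relation.TransGen fun a b => O a b = true) := ⟨hac⟩
  Subrelation.wf (r := Relation.TransGen fun a b => O a b = true) (fun h => .single h) <|
    Finite.wellFounded_of_trans_of_irrefl (Relation.TransGen fun a b => O a b = true)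

lemma UniqueSource0.one_le_indeg_succ (hsrc : UniqueSource0 n wt O) (i : Fin n) :
    1 ≤ indeg n wt O i.succ :=
  Nat.one_le_iff_ne_zero.mpr fun h => i.succ_ne_zero ((hsrc _).mp h)

lemma UniqueSource0.indeg_eq_of_indeg_succ_sub_one_eq (hsrc : UniqueSource0 n wt O)
    (hsrc' : UniqueSource0 n wt O')
    (h : ∀ i : Fin n, indeg n wt O i.succ - 1 = indeg n wt O' i.succ - 1) (v : Fin (n + 1)) :
    indeg n wt O v = indeg n wt O' v := by
  cases v using Fin.cases with
  | zero => rw [(hsrc 0).mpr rfl, (hsrc' 0).mpr rfl]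
  | succ i =>
    have := h i
    have := hsrc.one_le_indeg_succ i
    have := hsrc'.one_le_indeg_succ i
    omega

lemma IsOrient.ite_add_ite (hsymm : ∀ i j, wt i j = wt j i) (hO : IsOrient n wt O) (i j) :
    ((if O j i then wt j i else 0) + if O i j then wt i j else 0) = wt j i := by
  by_cases hji : O j i = true
  · simp [hji, hO.2 _ _ hji]
  by_cases hij : O i j = true
  · simp [hji, hij, hsymm i j]
  have hw : wt j i = 0 := by
    by_contra hw
    exact ((hO.1 j i).mp hw).elim hji hij
  simp [hji, hij, hw]

lemma IsOrient.two_mul_sum_indeg (hsymm : ∀ i j, wt i j = wt j i) (hO : IsOrient n wt O) :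
    2 * ∑ v, indeg n wt O v = ∑ v, ∑ j, wt j v := by
  unfold indeg
  rw [two_mul]
  nth_rewrite 2 [Finset.sum_comm]
  simp only [← Finset.sum_add_distrib, hO.ite_add_ite hsymm]

lemma IsOrient.sum_indeg_eq (hsymm : ∀ i j, wt i j = wt j i) (hO : IsOrient n wt O)
    (hO' : IsOrient n wt O') : ∑ v, indeg n wt O v = ∑ v, indeg n wt O' v := by
  have := hO.two_mul_sum_indeg hsymm
  have := hO'.two_mul_sum_indeg hsymm
  omega

lemma UniqueSource0.sum_indeg_succ_sub_one_add (hsrc : UniqueSource0 n wt O) :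
    ∑ i : Fin n, (indeg n wt O i.succ - 1) + n = ∑ v, indeg n wt O v := by
  rw [Fin.sum_univ_succ, (hsrc 0).mpr rfl, zero_add]
  have : ∑ i : Fin n, (indeg n wt O i.succ - 1 + 1) = ∑ i : Fin n, indeg n wt O i.succ :=
    Finset.sum_congr rfl fun i _ => Nat.sub_add_cancel (hsrc.one_le_indeg_succ i)
  simpa [Finset.sum_add_distrib] using this

lemma indeg_le_dU (hsymm : ∀ i j, wt i j = wt j i) {U : Finset (Fin n)} {i : Fin n}
    (hU : ∀ j ∈ U.image Fin.succ, O j i.succ = false) : indeg n wt O i.succ ≤ dU n wt U i := by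
  unfold indeg dU
  rw [← Finset.sum_compl_add_sum (U.image Fin.succ),
    Finset.sum_eq_zero (s := U.image Fin.succ) fun j hj => by simp [hU j hj], add_zero]
  refine Finset.sum_le_sum fun j _ => ?_
  rw [hsymm i.succ j]
  split <;> simp

/-- A vertex of `U` with no edge coming in from `U` witnesses the parking condition for `U`. -/
lemma isGPF_indeg_sub_one (hsymm : ∀ i j, wt i j = wt j i) (hac : AcyclicO n O)
    (hsrc : UniqueSource0 n wt O) : IsGPF n wt fun i => indeg n wt O i.succ - 1 := by
  intro U hU
  obtain ⟨v, hvU, hmin⟩ := hac.wellFounded.has_min (U.image Fin.succ : Set _) (by simpa using hU)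
  obtain ⟨i, hi, rfl⟩ := Finset.mem_image.mp hvU
  have hle := indeg_le_dU (O := O) hsymm fun j hj => by simpa using hmin j hj
  have := hsrc.one_le_indeg_succ i
  exact ⟨i, hi, show indeg n wt O i.succ - 1 < _ by omega⟩

def rankOrient {α : Type*} [LinearOrder α] (wt : Fin (n + 1) → Fin (n + 1) → ℕ)
    (ρ : Fin (n + 1) → α) (a b : Fin (n + 1)) : Bool :=
  decide (wt a b ≠ 0 ∧ ρ a < ρ b)

section rankOrient

variable {α : Type*} [LinearOrder α] {ρ : Fin (n + 1) → α}

lemma rankOrient_eq_true {a b : Fin (n + 1)} :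
    rankOrient wt ρ a b = true ↔ wt a b ≠ 0 ∧ ρ a < ρ b := by
  simp [rankOrient]

lemma isOrient_rankOrient (hsymm : ∀ i j, wt i j = wt j i) (hloop : ∀ i, wt i i = 0)
    (hρ : Function.Injective ρ) : IsOrient n wt (rankOrient wt ρ) := by
  refine ⟨fun a b => ?_, fun a b h => ?_⟩
  · simp only [rankOrient_eq_true, hsymm b a]
    constructor
    · intro hw
      have hab : ρ a ≠ ρ b := fun h => hw (hρ h ▸ hloop a)
      exact (lt_or_gt_of_ne hab).imp (⟨hw, ·⟩) (⟨hw, ·⟩)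
    · rintro (h | h) <;> exact h.1
  · rw [rankOrient_eq_true] at h
    simp only [rankOrient, decide_eq_false_iff_not, not_and, not_lt]
    exact fun _ => h.2.le

lemma acyclicO_rankOrient : AcyclicO n (rankOrient wt ρ) := by
  have hmono : ∀ a b, Relation.TransGen (fun a b => rankOrient wt ρ a b = true) a b → ρ a < ρ b :=
    fun a b h => by
      induction h with
      | single h => exact (rankOrient_eq_true.mp h).2
      | tail _ h ih => exact ih.trans (rankOrient_eq_true.mp h).2
  exact fun v hv => lt_irrefl _ (hmono v v hv)

lemma indeg_rankOrient (v : Fin (n + 1)) :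
    indeg n wt (rankOrient wt ρ) v = ∑ j with ρ j < ρ v, wt j v := by
  rw [indeg, Finset.sum_filter]
  refine Finset.sum_congr rfl fun j _ => ?_
  by_cases hw : wt j v = 0 <;> simp [rankOrient, hw]

end rankOrient

/-- Dhar's burning algorithm: repeatedly remove from `U` a vertex satisfying the parking condition
for what is left; `r` records the removal times. -/
lemma IsGPF.exists_rank_on {c : Fin n → ℕ} (hc : IsGPF n wt c) (U : Finset (Fin n)) :
    ∃ r : Fin n → ℕ, Set.InjOn r U ∧ ∀ i ∈ U, c i < dU n wt {k ∈ U | r i ≤ r k} i := by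
  induction U using Finset.strongInduction with
  | _ U ih =>
    rcases U.eq_empty_or_nonempty with rfl | hU
    · exact ⟨0, by simp, by simp⟩
    obtain ⟨i, hi, hci⟩ := hc U hU
    obtain ⟨r, hinj, hr⟩ := ih (U.erase i) (Finset.erase_ssubset hi)
    refine ⟨fun k => if k = i then 0 else r k + 1, fun k hk m hm hkm => ?_, fun k hk => ?_⟩
    · by_cases hki : k = i <;> by_cases hmi : m = i <;>
        simp only [hki, hmi, if_true, if_false] at hkm
      · exact hki.trans hmi.symm
      · omega
      · omega
      · exact hinj (by simp [hki, hk]) (by simp [hmi, hm]) (by omega)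
    by_cases hki : k = i
    · subst hki
      simpa using hci
    · convert hr k (Finset.mem_erase.mpr ⟨hki, hk⟩) using 2
      ext m
      by_cases hmi : m = i <;> simp [hki, hmi]

lemma IsGPF.exists_rank {c : Fin n → ℕ} (hc : IsGPF n wt c) :
    ∃ r : Fin n → ℕ, Function.Injective r ∧ ∀ i, c i < dU n wt {k | r i ≤ r k} i := by
  obtain ⟨r, hinj, hr⟩ := hc.exists_rank_on Finset.univ
  exact ⟨r, Set.injOn_univ.mp (by simpa using hinj), fun i => by simpa using hr i⟩

lemma IsGPF.exists_orient (hsymm : ∀ i j, wt i j = wt j i) (hloop : ∀ i, wt i i = 0)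
    {c : Fin n → ℕ} (hc : IsGPF n wt c) :
    ∃ O, (IsOrient n wt O ∧ AcyclicO n O ∧ UniqueSource0 n wt O) ∧
      ∀ i, c i < indeg n wt O i.succ := by
  obtain ⟨r, hinj, hr⟩ := hc.exists_rank
  let ρ : Fin (n + 1) → ℕ := Fin.cases 0 fun k => r k + 1
  have hρ : Function.Injective ρ := by
    intro a b hab
    cases a using Fin.cases <;> cases b using Fin.cases <;> simp_all [ρ, hinj.eq_iff]
  have hindeg : ∀ i, c i < indeg n wt (rankOrient wt ρ) i.succ := by
    intro i
    have hcompl : (({k | r i ≤ r k} : Finset (Fin n)).image Fin.succ)ᶜ =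
        ({j | ρ j < ρ i.succ} : Finset _) := by
      ext j
      cases j using Fin.cases <;> simp [ρ, Fin.succ_ne_zero]
    rw [indeg_rankOrient, ← hcompl]
    simpa [dU, hsymm i.succ] using hr i
  refine ⟨rankOrient wt ρ, ⟨isOrient_rankOrient hsymm hloop hρ, acyclicO_rankOrient, ?_⟩, hindeg⟩
  intro v
  refine ⟨fun h => ?_, fun hv => by simp [hv, indeg_rankOrient, ρ]⟩
  cases v using Fin.cases with
  | zero => rfl
  | succ i => exact absurd h (Nat.ne_zero_of_lt (hindeg i))

/-- Both sides are compared with `|E(G)| - n` through the orientation that the burning algorithm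
builds from `c`. -/
lemma IsGPF.sum_le_sum_indeg_sub_one (hsymm : ∀ i j, wt i j = wt j i) (hloop : ∀ i, wt i i = 0)
    {c : Fin n → ℕ} (hc : IsGPF n wt c) (hO : IsOrient n wt O) (hsrc : UniqueSource0 n wt O) :
    ∑ i, c i ≤ ∑ i : Fin n, (indeg n wt O i.succ - 1) := by
  obtain ⟨O', ⟨hO', -, hsrc'⟩, hc'⟩ := hc.exists_orient hsymm hloop
  have := hO.sum_indeg_eq hsymm hO'
  have := hsrc.sum_indeg_succ_sub_one_add
  have := hsrc'.sum_indeg_succ_sub_one_add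
  have : ∑ i, c i ≤ ∑ i : Fin n, (indeg n wt O' i.succ - 1) :=
    Finset.sum_le_sum fun i _ => Nat.le_sub_one_of_lt (hc' i)
  omega

lemma isMaxGPF_indeg_sub_one (hsymm : ∀ i j, wt i j = wt j i) (hloop : ∀ i, wt i i = 0)
    (hO : IsOrient n wt O) (hac : AcyclicO n O) (hsrc : UniqueSource0 n wt O) :
    IsMaxGPF n wt fun i => indeg n wt O i.succ - 1 := by
  refine ⟨isGPF_indeg_sub_one hsymm hac hsrc, fun c hc hle => ?_⟩
  have hsum := hc.sum_le_sum_indeg_sub_one hsymm hloop hO hsrc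
  funext i
  exact ((Finset.sum_eq_sum_iff_of_le fun i _ => hle i).mp
    (le_antisymm (Finset.sum_le_sum fun i _ => hle i) hsum) i (Finset.mem_univ i)).symm

lemma IsOrient.exists_reversed_into (hO : IsOrient n wt O) (hO' : IsOrient n wt O')
    {u v : Fin (n + 1)} (huv : O u v = true) (huv' : O' u v = false) (hu : indeg n wt O u = indeg n wt O' u) :
    ∃ w, O w u = true ∧ O' w u = false := by
  by_contra! h
  have hvu : O v u = false := hO.2 u v huv
  have hvu' : O' v u = true :=
    ((hO'.1 u v).mp ((hO.1 u v).mpr (Or.inl huv))).resolve_left (by simp [huv'])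
  have : indeg n wt O u < indeg n wt O' u := by
    refine Finset.sum_lt_sum (fun j _ => ?_) ⟨v, Finset.mem_univ v, ?_⟩
    · cases hj : O j u
      · simp
      · simp [h j hj]
    · rw [hvu, hvu', if_pos rfl]
      exact Nat.pos_of_ne_zero ((hO'.1 v u).mpr (Or.inl hvu'))
  omega

/-- An edge of `O` reversed in `O'` would start an infinite descending chain of such edges. -/
lemma AcyclicO.eq_of_indeg_eq (hac : AcyclicO n O) (hO : IsOrient n wt O) (hO' : IsOrient n wt O')
    (hind : ∀ v, indeg n wt O v = indeg n wt O' v) : O = O' := by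
  have hsub : ∀ v u, O u v = true → O' u v = true := by
    intro v
    induction v using hac.wellFounded.induction with
    | _ v ih =>
      intro u huv
      by_contra huv'
      obtain ⟨w, hwu, hwu'⟩ :=
        hO.exists_reversed_into hO' huv (by simpa using huv') (hind u)
      exact absurd (ih u huv w hwu) (by simp [hwu'])
  funext a b
  cases hab : O a b
  · cases hab' : O' a b
    · rfl
    · have hba : O b a = true :=
        ((hO.1 a b).mp ((hO'.1 a b).mpr (Or.inl hab'))).resolve_left (by simp [hab])
      simpa [hO'.2 a b hab'] using hsub a b hba
  · exact (hsub b a hab).symm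

end

theorem acyclicOrient_bij_maxGParking_general (n : ℕ) (wt : Fin (n + 1) → Fin (n + 1) → ℕ)
    (hsymm : ∀ i j, wt i j = wt j i) (hloop : ∀ i, wt i i = 0) :
    Set.BijOn (fun O (i : Fin n) => indeg n wt O i.succ - 1)
      {O | IsOrient n wt O ∧ AcyclicO n O ∧ UniqueSource0 n wt O}
      {b | IsMaxGPF n wt b} := by
  refine ⟨fun O ⟨hO, hac, hsrc⟩ => isMaxGPF_indeg_sub_one hsymm hloop hO hac hsrc, ?_, ?_⟩
  · rintro O ⟨hO, hac, hsrc⟩ O' ⟨hO', -, hsrc'⟩ heq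
    exact hac.eq_of_indeg_eq hO hO' (hsrc.indeg_eq_of_indeg_succ_sub_one_eq hsrc' (congrFun heq))
  · rintro c ⟨hc, hmax⟩
    obtain ⟨O, hOmem, hlt⟩ := hc.exists_orient hsymm hloop
    have hGPF := isGPF_indeg_sub_one hsymm hOmem.2.1 hOmem.2.2
    exact ⟨O, hOmem, hmax _ hGPF fun i => Nat.le_sub_one_of_lt (hlt i)⟩

/-- `O ↦ (indeg_O(1) − 1, …, indeg_O(n) − 1)` maps acyclic orientations with
unique source `0` to maximal `G`-parking functions, bijectively. -/
theorem acyclicOrient_bij_maxGParking (n : ℕ) (wt : Fin (n + 1) → Fin (n + 1) → ℕ)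
    (hsymm : ∀ i j, wt i j = wt j i) (hloop : ∀ i, wt i i = 0)
    (hconn : (SimpleGraph.fromRel fun i j : Fin (n + 1) => wt i j ≠ 0).Connected) :
    Set.BijOn (fun O (i : Fin n) => indeg n wt O i.succ - 1)
      {O | IsOrient n wt O ∧ AcyclicO n O ∧ UniqueSource0 n wt O}
      {b | IsMaxGPF n wt b} :=
  acyclicOrient_bij_maxGParking_general n wt hsymm hloop
end

section
/- Suppose U = {(u_i, v_j) : 0 ≤ i < p, 0 ≤ j < q} is a 2-dimensional weight-vector set built from two independent nondecreasing positive vectors u = (u_0,...,u_{p−1}) and v = (v_0,...,v_{q−1}). Then a pair (a,b) ∈ ℕ^p × ℕ^q is a 2-dimensional U-parking function if and only if a is a u-parking function and b is a v-parking function. -/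
/-! With independent weights the bound met by an east step depends only on the number `i` of
earlier east steps, and it is the bound `u_i` of the one-dimensional condition; likewise for north
steps. Along any lattice path these counts run through all of `0, …, p - 1` on the east steps and
`0, …, q - 1` on the north steps, so every path imposes exactly the conditions `a_(i+1) < u_i` and
`b_(j+1) < v_j`. -/

/-- Number of east steps of the lattice path `P` strictly before step `r`
(`P s = true` means step `s` is an east step). -/
def EBefore (p q : ℕ) (P : Fin (p + q) → Bool) (r : Fin (p + q)) : ℕ :=
  (Finset.univ.filter fun s : Fin (p + q) => s < r ∧ P s = true).card

/-- Number of north steps of the lattice path `P` strictly before step `r`. -/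
def NBefore (p q : ℕ) (P : Fin (p + q) → Bool) (r : Fin (p + q)) : ℕ :=
  (Finset.univ.filter fun s : Fin (p + q) => s < r ∧ P s = false).card

/-- `P` encodes a monotone lattice path from `(0,0)` to `(p,q)`:
exactly `p` of its `p + q` steps are east steps. -/
def IsLatticePath (p q : ℕ) (P : Fin (p + q) → Bool) : Prop :=
  (Finset.univ.filter fun s : Fin (p + q) => P s = true).card = p

/-- `(a, b)` is a 2-dimensional `U`-parking function for the node weights
`u_{i,j}, v_{i,j}`: the order statistics of `a` and `b` are bounded by some
lattice path from `(0,0)` to `(p,q)`, where an east step from `(x,y)` bounds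
the next order statistic of `a` by `u x y` and a north step from `(x,y)`
bounds the next order statistic of `b` by `v x y`. -/
def IsUPF2 (p q : ℕ) (u v : ℕ → ℕ → ℕ) (a : Fin p → ℕ) (b : Fin q → ℕ) : Prop :=
  ∃ σ : Equiv.Perm (Fin p), ∃ τ : Equiv.Perm (Fin q),
    Monotone (a ∘ ⇑σ) ∧ Monotone (b ∘ ⇑τ) ∧
    ∃ P : Fin (p + q) → Bool, IsLatticePath p q P ∧
      ∀ r : Fin (p + q),
        (P r = true → ∀ h : EBefore p q P r < p,
          a (σ ⟨EBefore p q P r, h⟩) < u (EBefore p q P r) (NBefore p q P r)) ∧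
        (P r = false → ∀ h : NBefore p q P r < q,
          b (τ ⟨NBefore p q P r, h⟩) < v (EBefore p q P r) (NBefore p q P r))

/-- `a` is a `u`-parking function. -/
def IsUPF (n : ℕ) (u : Fin n → ℕ) (a : Fin n → ℕ) : Prop :=
  ∃ σ : Equiv.Perm (Fin n), Monotone (a ∘ ⇑σ) ∧ ∀ i : Fin n, a (σ i) < u i

open Finset

section Rank

variable {α : Type*} [LinearOrder α] [Fintype α] (Q : α → Prop) [DecidablePred Q]

lemma card_filter_lt_and_lt_of_lt {r r' : α} (h : r < r') (hr : Q r) :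
    #{s | s < r ∧ Q s} < #{s | s < r' ∧ Q s} := by
  refine card_lt_card <| (ssubset_iff_of_subset fun s hs => ?_).2 ⟨r, ?_, ?_⟩
  · simp only [mem_filter, mem_univ, true_and] at hs ⊢
    exact ⟨hs.1.trans h, hs.2⟩
  · simp [h, hr]
  · simp

lemma card_filter_lt_and_lt_card_filter {r : α} (hr : Q r) :
    #{s | s < r ∧ Q s} < #{s | Q s} := by
  refine card_lt_card <| (ssubset_iff_of_subset fun s hs => ?_).2 ⟨r, ?_, ?_⟩
  · simp only [mem_filter, mem_univ, true_and] at hs ⊢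
    exact hs.2
  · simp [hr]
  · simp

lemma exists_card_filter_lt_and_eq {i : ℕ} (hi : i < #{s | Q s}) :
    ∃ r, Q r ∧ #{s | s < r ∧ Q s} = i := by
  have hinj : ∀ r₁ r₂ (h₁ : r₁ ∈ ({s | Q s} : Finset α)) (h₂ : r₂ ∈ ({s | Q s} : Finset α)),
      #{s | s < r₁ ∧ Q s} = #{s | s < r₂ ∧ Q s} → r₁ = r₂ := by
    intro r₁ r₂ h₁ h₂ heq
    simp only [mem_filter, mem_univ, true_and] at h₁ h₂
    rcases lt_trichotomy r₁ r₂ with h | h | h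
    · exact absurd heq (card_filter_lt_and_lt_of_lt Q h h₁).ne
    · exact h
    · exact absurd heq (card_filter_lt_and_lt_of_lt Q h h₂).ne'
  obtain ⟨r, hr, hri⟩ := surj_on_of_inj_on_of_card_le (t := range #{s | Q s})
    (fun r _ => #{s | s < r ∧ Q s})
    (fun r hr => mem_range.2 (card_filter_lt_and_lt_card_filter Q (by simpa using hr)))
    hinj (by simp) i (mem_range.2 hi)
  exact ⟨r, by simpa using hr, hri.symm⟩

end Rank

section LatticePath

variable {p q : ℕ} {P : Fin (p + q) → Bool}

lemma IsLatticePath.card_north (hP : IsLatticePath p q P) : #{s | P s = false} = q := by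
  have h := card_filter_add_card_filter_not (s := univ) (p := fun s => P s = true)
  simp only [Bool.not_eq_true, card_univ, Fintype.card_fin] at h
  rw [hP] at h
  omega

lemma IsLatticePath.exists_east (hP : IsLatticePath p q P) {i : ℕ} (hi : i < p) :
    ∃ r, P r = true ∧ EBefore p q P r = i :=
  exists_card_filter_lt_and_eq (P · = true) (hP.symm ▸ hi)

lemma IsLatticePath.exists_north (hP : IsLatticePath p q P) {j : ℕ} (hj : j < q) :
    ∃ r, P r = false ∧ NBefore p q P r = j :=
  exists_card_filter_lt_and_eq (P · = false) (hP.card_north.symm ▸ hj)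

lemma exists_isLatticePath (p q : ℕ) : ∃ P, IsLatticePath p q P :=
  ⟨fun r => decide (r.val < p), by simp [IsLatticePath, Fin.card_filter_val_lt]⟩

end LatticePath

section ParkingFunction

variable {p q : ℕ} {a : Fin p → ℕ} {b : Fin q → ℕ}

lemma IsUPF2.isUPF_left {uu : ℕ → ℕ} {v : ℕ → ℕ → ℕ}
    (h : IsUPF2 p q (fun i _ => uu i) v a b) : IsUPF p (fun i : Fin p => uu i) a := by
  obtain ⟨σ, _, hσ, _, P, hP, hbound⟩ := h
  refine ⟨σ, hσ, fun i => ?_⟩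
  obtain ⟨r, hr, hri⟩ := hP.exists_east i.isLt
  have hbound_r := (hbound r).1 hr
  rw [hri] at hbound_r
  exact hbound_r i.isLt

lemma IsUPF2.isUPF_right {u : ℕ → ℕ → ℕ} {vv : ℕ → ℕ}
    (h : IsUPF2 p q u (fun _ j => vv j) a b) : IsUPF q (fun j : Fin q => vv j) b := by
  obtain ⟨_, τ, _, hτ, P, hP, hbound⟩ := h
  refine ⟨τ, hτ, fun j => ?_⟩
  obtain ⟨r, hr, hrj⟩ := hP.exists_north j.isLt
  have hbound_r := (hbound r).2 hr
  rw [hrj] at hbound_r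
  exact hbound_r j.isLt

lemma isUPF2_of_isUPF {uu vv : ℕ → ℕ} (ha : IsUPF p (fun i : Fin p => uu i) a)
    (hb : IsUPF q (fun j : Fin q => vv j) b) :
    IsUPF2 p q (fun i _ => uu i) (fun _ j => vv j) a b := by
  obtain ⟨σ, hσ, ha⟩ := ha
  obtain ⟨τ, hτ, hb⟩ := hb
  obtain ⟨P, hP⟩ := exists_isLatticePath p q
  exact ⟨σ, τ, hσ, hτ, P, hP, fun r => ⟨fun _ h => ha ⟨_, h⟩, fun _ h => hb ⟨_, h⟩⟩⟩

end ParkingFunction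

theorem uPF2_independent_iff_general (p q : ℕ) (uu vv : ℕ → ℕ)
    (a : Fin p → ℕ) (b : Fin q → ℕ) :
    IsUPF2 p q (fun i _ => uu i) (fun _ j => vv j) a b ↔
      IsUPF p (fun i : Fin p => uu (i : ℕ)) a ∧ IsUPF q (fun j : Fin q => vv (j : ℕ)) b :=
  ⟨fun h => ⟨h.isUPF_left, h.isUPF_right⟩, fun ⟨ha, hb⟩ => isUPF2_of_isUPF ha hb⟩

/-- When the 2-dimensional node set is built from two independent vectors
(`u_{i,j} = uu i`, `v_{i,j} = vv j`), a pair is a 2-dimensional `U`-parking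
function iff each component is a parking function for the respective vector. -/
theorem uPF2_independent_iff (p q : ℕ) (uu vv : ℕ → ℕ)
    (huu : ∀ i j, i ≤ j → uu i ≤ uu j) (hvv : ∀ i j, i ≤ j → vv i ≤ vv j)
    (huupos : ∀ i, 0 < uu i) (hvvpos : ∀ j, 0 < vv j)
    (a : Fin p → ℕ) (b : Fin q → ℕ) :
    IsUPF2 p q (fun i _ => uu i) (fun _ j => vv j) a b ↔
      IsUPF p (fun i : Fin p => uu (i : ℕ)) a ∧ IsUPF q (fun j : Fin q => vv (j : ℕ)) b :=
  uPF2_independent_iff_general p q uu vv a b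
end

section
/- Let G be a connected multigraph on {0} ∪ A ∪ B with root 0 whose set of G-parking functions is invariant under S_p × S_q, where |A| = p, |B| = q. Then any two non-cut vertices of G lying both in A (or both in B) have the same degree in G (degrees counted with edge weights). -/
/-- For a rooted multigraph on `Option ι` (root `none`) encoded by a symmetric
weight function `wt`, `dU' wt U i` is the total weight of edges from the
nonroot vertex `i` to vertices outside `U`. -/
def dU' {ι : Type} [Fintype ι] [DecidableEq ι]
    (wt : Option ι → Option ι → ℕ) (U : Finset ι) (i : ι) : ℕ :=
  ∑ j ∈ (U.image Option.some)ᶜ, wt (some i) j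

/-- `b` is a `G`-parking function for the rooted multigraph encoded by `wt`. -/
def IsGPF' {ι : Type} [Fintype ι] [DecidableEq ι]
    (wt : Option ι → Option ι → ℕ) (b : ι → ℕ) : Prop :=
  ∀ U : Finset ι, U.Nonempty → ∃ i ∈ U, b i < dU' wt U i

/-- `b` is a maximal `G`-parking function. -/
def IsMaxGPF' {ι : Type} [Fintype ι] [DecidableEq ι]
    (wt : Option ι → Option ι → ℕ) (b : ι → ℕ) : Prop :=
  IsGPF' wt b ∧ ∀ c : ι → ℕ, IsGPF' wt c → b ≤ c → c = b

/-- Weighted degree of a vertex. -/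
def degW {ι : Type} [Fintype ι] (wt : Option ι → Option ι → ℕ) (x : Option ι) : ℕ :=
  ∑ y, wt x y

/-- `v` is a cut vertex: deleting it disconnects the graph. -/
def IsCutVx {ι : Type} (wt : Option ι → Option ι → ℕ) (v : Option ι) : Prop :=
  ¬ ((SimpleGraph.fromRel fun x y : Option ι => wt x y ≠ 0).induce
      {u : Option ι | u ≠ v}).Connected


/-!
For a non-cut vertex `i`, rank every other vertex by its distance to the root in `G - i` and put
`i` on top. Orienting each edge towards its endpoint of larger rank gives an acyclic orientation
with unique source `0` and sink `i`, and its indegrees minus one form a `G`-parking function `b`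
with `b i = deg i - 1`. Every `G`-parking function has `b j < deg j`, so applying the
transposition of `i` and `j` (allowed when both lie in `A` or both in `B`) gives
`deg i ≤ deg j`.
-/

open Finset

namespace SimpleGraph

theorem Connected.exists_adj_dist_lt {V : Type*} {G : SimpleGraph V} (hG : G.Connected)
    {x r : V} (hx : x ≠ r) : ∃ y, G.Adj x y ∧ G.dist y r < G.dist x r := by
  obtain ⟨w, hw⟩ := hG.exists_walk_length_eq_dist x r
  obtain ⟨y, hxy, w', rfl⟩ := Walk.exists_eq_cons_of_ne hx w
  refine ⟨y, hxy, ?_⟩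
  rw [← hw, Walk.length_cons]
  exact Nat.lt_succ_of_le (dist_le w')

end SimpleGraph

section ParkingFunctions

variable {ι : Type}

/-- Orienting each edge towards its endpoint of larger rank, the root is the only source. -/
def IsRootRank {α : Type*} [LinearOrder α] (wt : Option ι → Option ι → ℕ)
    (L : Option ι → α) : Prop :=
  ∀ x, x ≠ none → ∃ y, wt x y ≠ 0 ∧ L y < L x

/-- The indegree minus one in the orientation towards larger rank. -/
def rankGPF [Fintype ι] {α : Type*} [LinearOrder α] (wt : Option ι → Option ι → ℕ)
    (L : Option ι → α) (v : ι) : ℕ :=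
  (∑ y ∈ univ.filter (fun y => L y < L (some v)), wt (some v) y) - 1

variable {wt : Option ι → Option ι → ℕ}

theorem wt_ne_zero_of_adj_fromRel (hsymm : ∀ x y, wt x y = wt y x) {x y : Option ι}
    (h : (SimpleGraph.fromRel fun x y : Option ι => wt x y ≠ 0).Adj x y) : wt x y ≠ 0 := by
  rw [SimpleGraph.fromRel_adj] at h
  exact h.2.elim id fun h' => hsymm x y ▸ h'

theorem exists_isRootRank_of_not_isCutVx [DecidableEq ι] (hsymm : ∀ x y, wt x y = wt y x)
    (hconn : (SimpleGraph.fromRel fun x y : Option ι => wt x y ≠ 0).Connected)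
    {i : ι} (hi : ¬ IsCutVx wt (some i)) :
    ∃ L : Option ι → WithTop ℕ, IsRootRank wt L ∧ ∀ y ≠ some i, L y < L (some i) := by
  set G := SimpleGraph.fromRel fun x y : Option ι => wt x y ≠ 0
  set s : Set (Option ι) := {u | u ≠ some i}
  have hGs : (G.induce s).Connected := not_not.mp hi
  let r : s := ⟨none, (Option.some_ne_none i).symm⟩
  let L : Option ι → WithTop ℕ := fun x =>
    if hx : x = some i then ⊤ else ((G.induce s).dist ⟨x, hx⟩ r : ℕ)
  have hmax : ∀ y ≠ some i, L y < L (some i) := fun y hy => by simp [L, hy]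
  refine ⟨L, fun x hx => ?_, hmax⟩
  by_cases hxi : x = some i
  · subst hxi
    have : Nonempty ι := ⟨i⟩
    obtain ⟨y, hy⟩ := hconn.preconnected.exists_adj_of_nontrivial (some i)
    exact ⟨y, wt_ne_zero_of_adj_fromRel hsymm hy, hmax y hy.ne.symm⟩
  · obtain ⟨y, hxy, hdist⟩ :=
      hGs.exists_adj_dist_lt (x := ⟨x, hxi⟩) (r := r) fun h => hx (congrArg Subtype.val h)
    have hy : (y : Option ι) ≠ some i := y.2
    refine ⟨y, wt_ne_zero_of_adj_fromRel hsymm hxy, ?_⟩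
    simpa [L, hxi, hy] using hdist

variable [Fintype ι] {α : Type*} [LinearOrder α] {L : Option ι → α}

theorem IsRootRank.sum_lower_pos (hL : IsRootRank wt L) (v : ι) :
    0 < ∑ y ∈ univ.filter (fun y => L y < L (some v)), wt (some v) y := by
  obtain ⟨y, hy, hLy⟩ := hL (some v) (Option.some_ne_none v)
  exact (Nat.pos_of_ne_zero hy).trans_le
    (single_le_sum (fun _ _ => Nat.zero_le _) (mem_filter.mpr ⟨mem_univ y, hLy⟩))

variable [DecidableEq ι]

theorem IsGPF'.lt_degW {b : ι → ℕ} (hb : IsGPF' wt b) (i : ι) :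
    b i < degW wt (some i) := by
  obtain ⟨j, hj, hlt⟩ := hb {i} (singleton_nonempty i)
  rw [mem_singleton.mp hj] at hlt
  exact hlt.trans_le (sum_le_sum_of_subset (subset_univ _))

theorem isGPF'_rankGPF (hL : IsRootRank wt L) : IsGPF' wt (rankGPF wt L) := by
  intro U hU
  obtain ⟨v, hv, hmin⟩ := exists_min_image U (fun v => L (some v)) hU
  have hlower : univ.filter (fun y => L y < L (some v)) ⊆ (U.image some)ᶜ := by
    intro y hy
    rw [mem_compl, mem_image]
    rintro ⟨u, hu, rfl⟩
    exact (mem_filter.mp hy).2.not_ge (hmin u hu)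
  exact ⟨v, hv, (Nat.sub_lt (hL.sum_lower_pos v) one_pos).trans_le
    (sum_le_sum_of_subset hlower)⟩

theorem rankGPF_add_one (hloop : ∀ x, wt x x = 0) (hL : IsRootRank wt L) {i : ι}
    (hmax : ∀ y ≠ some i, L y < L (some i)) : rankGPF wt L i + 1 = degW wt (some i) := by
  have hlower : univ.filter (fun y => L y < L (some i)) = univ.erase (some i) := by
    ext y
    simp only [mem_filter, mem_univ, true_and, mem_erase, and_true]
    exact ⟨fun h hy => (hy ▸ h).false, hmax y⟩
  have hsum : ∑ y ∈ univ.filter (fun y => L y < L (some i)), wt (some i) y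
      = degW wt (some i) := by
    rw [hlower, sum_erase _ (hloop _)]
    rfl
  have := hL.sum_lower_pos i
  rw [rankGPF]
  omega

theorem degW_le_of_isGPF'_comp (hsymm : ∀ x y, wt x y = wt y x) (hloop : ∀ x, wt x x = 0)
    (hconn : (SimpleGraph.fromRel fun x y : Option ι => wt x y ≠ 0).Connected)
    {π : ι → ι} (hinv : ∀ b, IsGPF' wt b → IsGPF' wt (b ∘ π)) {i j : ι} (hπ : π j = i)
    (hi : ¬ IsCutVx wt (some i)) : degW wt (some i) ≤ degW wt (some j) := by
  obtain ⟨L, hL, hmax⟩ := exists_isRootRank_of_not_isCutVx hsymm hconn hi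
  have hlt := (hinv _ (isGPF'_rankGPF hL)).lt_degW j
  rw [Function.comp_apply, hπ] at hlt
  rw [← rankGPF_add_one hloop hL hmax]
  exact hlt

end ParkingFunctions

/-- If the `G`-parking functions of a connected rooted multigraph on
`{0} ∪ A ∪ B` are `S_p × S_q`-invariant, then any two non-cut vertices lying
both in `A`, or both in `B`, have the same weighted degree. -/
theorem nonCut_vertices_equal_degrees (p q : ℕ)
    (wt : Option (Fin p ⊕ Fin q) → Option (Fin p ⊕ Fin q) → ℕ)
    (hsymm : ∀ x y, wt x y = wt y x) (hloop : ∀ x, wt x x = 0)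
    (hconn : (SimpleGraph.fromRel
        fun x y : Option (Fin p ⊕ Fin q) => wt x y ≠ 0).Connected)
    (hinv : ∀ (b : Fin p ⊕ Fin q → ℕ) (σ : Equiv.Perm (Fin p)) (τ : Equiv.Perm (Fin q)),
        IsGPF' wt b → IsGPF' wt (b ∘ Sum.map ⇑σ ⇑τ)) :
    (∀ i i' : Fin p, ¬ IsCutVx wt (some (Sum.inl i)) → ¬ IsCutVx wt (some (Sum.inl i')) →
        degW wt (some (Sum.inl i)) = degW wt (some (Sum.inl i'))) ∧
    (∀ j j' : Fin q, ¬ IsCutVx wt (some (Sum.inr j)) → ¬ IsCutVx wt (some (Sum.inr j')) →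
        degW wt (some (Sum.inr j)) = degW wt (some (Sum.inr j'))) := by
  have degW_le := @degW_le_of_isGPF'_comp _ wt _ _ hsymm hloop hconn
  refine ⟨fun i i' hi hi' => le_antisymm ?_ ?_, fun j j' hj hj' => le_antisymm ?_ ?_⟩
  · exact degW_le (fun b => hinv b (Equiv.swap i i') 1) (by simp) hi
  · exact degW_le (fun b => hinv b (Equiv.swap i' i) 1) (by simp) hi'
  · exact degW_le (fun b => hinv b 1 (Equiv.swap j j')) (by simp) hj
  · exact degW_le (fun b => hinv b 1 (Equiv.swap j' j)) (by simp) hj'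
end

section
/- Let U be the affine 2-dimensional weight-vector set on the grid {0,...,p} × {0,...,q} given by u_{i,j} = a + bi + cj and v_{i,j} = e + ci + dj with a, c, e ≥ 1 and b, d ≥ 0, and fix i with 0 ≤ i < p. Then for each fixed i the sequence j ↦ u_{i,j} is strictly increasing in j, and for each fixed j the sequence i ↦ v_{i,j} is strictly increasing in i; consequently, distinct lattice paths from (0,0) to (p,q) give distinct increasing maximal 2-dimensional U-parking functions via P ↦ (weights of E-steps of P minus 1; weights of N-steps of P minus 1). -/
/-- For a monotone lattice path from `(0,0)` to `(p,q)` encoded by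
`f : Fin p → ℕ` (`f i` = number of north steps before the `(i+1)`-st east
step), `gOf p f j` is the number of east steps before the `(j+1)`-st north
step. -/
def gOf (p : ℕ) (f : Fin p → ℕ) (j : ℕ) : ℕ :=
  (Finset.univ.filter fun i : Fin p => f i ≤ j).card

/-! Already the E-step weights determine the path: in row `i` the weight `a + b i + c f(i)`
is strictly increasing in the height `f(i)` because `c ≥ 1`, and it stays positive since
`a ≥ 1`, so subtracting one loses nothing. -/

theorem Nat.injective_sub_one_of_pos {α : Type*} {g : α → ℕ} (hg : Function.Injective g)
    (hpos : ∀ x, 0 < g x) : Function.Injective fun x => g x - 1 := fun x y h =>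
  hg (by have := hpos x; have := hpos y; simp only at h; omega)

theorem affine_weights_strictMono_and_path_inj_general (p q a b c d e : ℕ)
    (ha : 1 ≤ a) (hc : 1 ≤ c) :
    (∀ i : ℕ, StrictMono fun j : ℕ => a + b * i + c * j) ∧
    (∀ j : ℕ, StrictMono fun i : ℕ => e + c * i + d * j) ∧
    (∀ f f' : Fin p → ℕ, Monotone f → Monotone f' →
      (∀ i, f i ≤ q) → (∀ i, f' i ≤ q) →
      (fun i : Fin p => a + b * (i : ℕ) + c * f i - 1) =
        (fun i : Fin p => a + b * (i : ℕ) + c * f' i - 1) →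
      (fun j : Fin q => e + c * gOf p f (j : ℕ) + d * (j : ℕ) - 1) =
        (fun j : Fin q => e + c * gOf p f' (j : ℕ) + d * (j : ℕ) - 1) →
      f = f') := by
  have hmul : StrictMono (c * ·) := strictMono_mul_left_of_pos hc
  refine ⟨fun i => hmul.const_add _, fun j => (hmul.const_add e).add_const _, ?_⟩
  intro f f' _ _ _ _ hu _
  funext i
  exact Nat.injective_sub_one_of_pos (hmul.const_add _).injective (fun _ => by omega)
    (congrFun hu i)

/-- For the affine node set `u_{i,j} = a + bi + cj`, `v_{i,j} = e + ci + dj`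
with `a, c, e ≥ 1`: for fixed `i` the weights `u_{i,j}` are strictly increasing
in `j`, for fixed `j` the weights `v_{i,j}` are strictly increasing in `i`, and
consequently the map sending a lattice path to its associated pair of sequences
(step weights minus one) is injective on monotone lattice paths. -/
theorem affine_weights_strictMono_and_path_inj (p q a b c d e : ℕ)
    (ha : 1 ≤ a) (hc : 1 ≤ c) (he : 1 ≤ e) :
    (∀ i : ℕ, StrictMono fun j : ℕ => a + b * i + c * j) ∧
    (∀ j : ℕ, StrictMono fun i : ℕ => e + c * i + d * j) ∧
    (∀ f f' : Fin p → ℕ, Monotone f → Monotone f' →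
      (∀ i, f i ≤ q) → (∀ i, f' i ≤ q) →
      (fun i : Fin p => a + b * (i : ℕ) + c * f i - 1) =
        (fun i : Fin p => a + b * (i : ℕ) + c * f' i - 1) →
      (fun j : Fin q => e + c * gOf p f (j : ℕ) + d * (j : ℕ) - 1) =
        (fun j : Fin q => e + c * gOf p f' (j : ℕ) + d * (j : ℕ) - 1) →
      f = f') :=
  affine_weights_strictMono_and_path_inj_general p q a b c d e ha hc
end
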